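/- arXiv:1209.0444 — 3 statements merged into one kernel-verified Lean document; each statement's English description precedes it below -/
import Mathlib

section
/- Let T̄ > 0 and suppose there exist symmetric positive definite n×n matrices P_1, …, P_N such that (i) A_i^T P_i + P_i A_i ≺ 0 for every i ∈ {1,…,N}, and (ii) the dual discrete-time conditions exp(A_i^T T̄) P_i exp(A_i T̄) − P_j ≺ 0 hold for all i, j ∈ {1,…,N} with i ≠ j. Then the switched system ẋ = A_{σ(t)} x is globally asymptotically stable over the class of switching sequences satisfying the minimum dwell-time condition t_{k+1} − t_k ≥ T̄ for all k. -/
open Matrix Filter Topology NormedSpace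

section helpers

variable {n : ℕ}

private lemma e_nonneg (v : Fin n → ℝ) : 0 ≤ v ⬝ᵥ v :=
  Finset.sum_nonneg fun i _ => mul_self_nonneg _

private lemma quad_homog (P : Matrix (Fin n) (Fin n) ℝ) (c : ℝ) (v : Fin n → ℝ) :
    P *ᵥ (c • v) ⬝ᵥ (c • v) = c ^ 2 * (P *ᵥ v ⬝ᵥ v) := by
  rw [Matrix.mulVec_smul, smul_dotProduct, dotProduct_smul]
  simp [smul_eq_mul]; ring

private lemma e_homog (c : ℝ) (v : Fin n → ℝ) :
    (c • v) ⬝ᵥ (c • v) = c ^ 2 * (v ⬝ᵥ v) := by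
  rw [smul_dotProduct, dotProduct_smul]
  simp [smul_eq_mul]; ring

private lemma quad_continuous (P : Matrix (Fin n) (Fin n) ℝ) :
    Continuous fun v : Fin n → ℝ => P *ᵥ v ⬝ᵥ v := by
  simp only [Matrix.mulVec, dotProduct]
  exact continuous_finset_sum _ fun i _ =>
    (continuous_finset_sum _ fun j _ => (continuous_const.mul (continuous_apply j))).mul
      (continuous_apply i)

private lemma e_continuous : Continuous fun v : Fin n → ℝ => v ⬝ᵥ v := by
  simp only [dotProduct]
  exact continuous_finset_sum _ fun i _ => (continuous_apply i).mul (continuous_apply i)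

private lemma posdef_quad_pos {P : Matrix (Fin n) (Fin n) ℝ} (hP : P.PosDef)
    {v : Fin n → ℝ} (hv : v ≠ 0) : 0 < P *ᵥ v ⬝ᵥ v := by
  have := hP.dotProduct_mulVec_pos hv
  rwa [star_trivial, dotProduct_comm] at this

private lemma possemidef_quad_nonneg {P : Matrix (Fin n) (Fin n) ℝ} (hP : P.PosSemidef)
    (v : Fin n → ℝ) : 0 ≤ P *ᵥ v ⬝ᵥ v := by
  have := hP.dotProduct_mulVec_nonneg v
  rwa [star_trivial, dotProduct_comm] at this

private lemma ratio_lemma (hn : 1 ≤ n) (f g : (Fin n → ℝ) → ℝ)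
    (hf : Continuous f) (hg : Continuous g)
    (hfh : ∀ (c : ℝ) v, f (c • v) = c ^ 2 * f v)
    (hgh : ∀ (c : ℝ) v, g (c • v) = c ^ 2 * g v)
    (hgpos : ∀ v, v ≠ 0 → 0 < g v) :
    ∃ v₀ : Fin n → ℝ, v₀ ≠ 0 ∧ ∀ v, f v ≤ (f v₀ / g v₀) * g v := by
  haveI : Nonempty (Fin n) := ⟨⟨0, hn⟩⟩
  have hsne : ((fun _ => 1 : Fin n → ℝ)) ∈ Metric.sphere (0 : Fin n → ℝ) 1 := by
    simp [mem_sphere_zero_iff_norm, pi_norm_const]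
  have hco : ContinuousOn (fun v => f v / g v) (Metric.sphere (0 : Fin n → ℝ) 1) := by
    apply hf.continuousOn.div hg.continuousOn
    intro v hv
    have hvne : v ≠ 0 := by
      intro h; rw [mem_sphere_zero_iff_norm, h, norm_zero] at hv; norm_num at hv
    exact (hgpos v hvne).ne'
  obtain ⟨v₀, hv₀S, hmax'⟩ := (isCompact_sphere (0 : Fin n → ℝ) 1).exists_isMaxOn
    ⟨_, hsne⟩ hco
  have hmax : ∀ v ∈ Metric.sphere (0 : Fin n → ℝ) 1, f v / g v ≤ f v₀ / g v₀ :=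
    fun v hv => hmax' hv
  have hv₀ne : v₀ ≠ 0 := by
    intro h; rw [mem_sphere_zero_iff_norm, h, norm_zero] at hv₀S; norm_num at hv₀S
  refine ⟨v₀, hv₀ne, fun v => ?_⟩
  by_cases hv : v = 0
  · have hf0 : f 0 = 0 := by
      have := hfh 0 0; simpa using this
    have hg0 : g 0 = 0 := by
      have := hgh 0 0; simpa using this
    simp [hv, hf0, hg0]
  · set c : ℝ := ‖v‖ with hc
    have hcpos : 0 < c := norm_pos_iff.2 hv
    set u : Fin n → ℝ := c⁻¹ • v with hu
    have huS : u ∈ Metric.sphere (0 : Fin n → ℝ) 1 := by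
      rw [mem_sphere_zero_iff_norm, hu, norm_smul, norm_inv, norm_norm]
      field_simp
    have hgu : 0 < g u := by
      apply hgpos
      intro h; rw [mem_sphere_zero_iff_norm, h, norm_zero] at huS; norm_num at huS
    have h1 : f u / g u ≤ f v₀ / g v₀ := hmax u huS
    have h2 : f u ≤ (f v₀ / g v₀) * g u := by
      rw [div_le_iff₀ hgu] at h1; linarith [h1]
    have hvc : v = c • u := by rw [hu, smul_smul, mul_inv_cancel₀ hcpos.ne', one_smul]
    calc f v = c ^ 2 * f u := by rw [hvc, hfh]
    _ ≤ c ^ 2 * ((f v₀ / g v₀) * g u) := by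
        apply mul_le_mul_of_nonneg_left h2 (by positivity)
    _ = (f v₀ / g v₀) * (c ^ 2 * g u) := by ring
    _ = (f v₀ / g v₀) * g v := by
        rw [hu, hgh]; field_simp

private lemma norm_sq_le_dot (v : Fin n → ℝ) : ‖v‖ ^ 2 ≤ v ⬝ᵥ v := by
  have h0 : 0 ≤ v ⬝ᵥ v := e_nonneg v
  have h1 : ‖v‖ ≤ Real.sqrt (v ⬝ᵥ v) := by
    rw [pi_norm_le_iff_of_nonneg (Real.sqrt_nonneg _)]
    intro i
    rw [Real.norm_eq_abs, ← Real.sqrt_sq_eq_abs]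
    apply Real.sqrt_le_sqrt
    have : v i ^ 2 = v i * v i := sq (v i) ▸ by ring
    rw [this]
    exact Finset.single_le_sum (f := fun j => v j * v j)
      (fun j _ => mul_self_nonneg _) (Finset.mem_univ i)
  calc ‖v‖ ^ 2 ≤ Real.sqrt (v ⬝ᵥ v) ^ 2 := pow_le_pow_left₀ (norm_nonneg _) h1 2
  _ = v ⬝ᵥ v := Real.sq_sqrt h0

private lemma quad_conj (Q B : Matrix (Fin n) (Fin n) ℝ) (v : Fin n → ℝ) :
    (Bᵀ * Q * B) *ᵥ v ⬝ᵥ v = (Q *ᵥ (B *ᵥ v)) ⬝ᵥ (B *ᵥ v) := by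
  rw [← Matrix.mulVec_mulVec, ← Matrix.mulVec_mulVec, dotProduct_comm,
    Matrix.dotProduct_mulVec, ← Matrix.mulVec_transpose, Matrix.transpose_transpose,
    dotProduct_comm]

end helpers

section deriv

attribute [local instance] Matrix.linftyOpNormedAddCommGroup Matrix.linftyOpNormedRing
  Matrix.linftyOpNormedAlgebra

variable {n : ℕ}

private lemma flow_hasDerivAt (A : Matrix (Fin n) (Fin n) ℝ) (y : Fin n → ℝ) (s : ℝ) :
    HasDerivAt (fun s : ℝ => NormedSpace.exp (s • A) *ᵥ y) (A *ᵥ (NormedSpace.exp (s • A) *ᵥ y)) s := by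
  have h1 : HasDerivAt (fun u : ℝ => NormedSpace.exp (u • A)) (A * NormedSpace.exp (s • A)) s :=
    hasDerivAt_exp_smul_const' A s
  let l : Matrix (Fin n) (Fin n) ℝ →ₗ[ℝ] (Fin n → ℝ) :=
    { toFun := fun M => M *ᵥ y
      map_add' := fun M N => Matrix.add_mulVec M N y
      map_smul' := fun c M => Matrix.smul_mulVec c M y }
  have h2 := (l.toContinuousLinearMap.hasFDerivAt (x := NormedSpace.exp (s • A))).comp_hasDerivAt s h1
  have h3 : HasDerivAt (fun u : ℝ => (NormedSpace.exp (u • A)) *ᵥ y) ((A * NormedSpace.exp (s • A)) *ᵥ y) s := h2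
  simpa [← Matrix.mulVec_mulVec] using h3

private lemma lyap_hasDerivAt (A P : Matrix (Fin n) (Fin n) ℝ) (y : Fin n → ℝ) (s : ℝ) :
    HasDerivAt (fun s : ℝ => (P *ᵥ (NormedSpace.exp (s • A) *ᵥ y)) ⬝ᵥ (NormedSpace.exp (s • A) *ᵥ y))
      (((Aᵀ * P + P * A) *ᵥ (NormedSpace.exp (s • A) *ᵥ y)) ⬝ᵥ (NormedSpace.exp (s • A) *ᵥ y)) s := by
  set u : ℝ → Fin n → ℝ := fun s => NormedSpace.exp (s • A) *ᵥ y with hu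
  have hus : ∀ s, HasDerivAt u (A *ᵥ u s) s := fun s => flow_hasDerivAt A y s
  have hPu : ∀ s, HasDerivAt (fun s => P *ᵥ u s) (P *ᵥ (A *ᵥ u s)) s := by
    intro s
    have := ((P.mulVecLin).toContinuousLinearMap.hasFDerivAt (x := u s)).comp_hasDerivAt s (hus s)
    simpa [Function.comp_def] using this
  have hcomp : ∀ s, HasDerivAt (fun s => (P *ᵥ u s) ⬝ᵥ u s)
      ((P *ᵥ (A *ᵥ u s)) ⬝ᵥ u s + (P *ᵥ u s) ⬝ᵥ (A *ᵥ u s)) s := by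
    intro s
    have h1 : ∀ i : Fin n, HasDerivAt (fun s => (P *ᵥ u s) i) ((P *ᵥ (A *ᵥ u s)) i) s :=
      fun i => (hasDerivAt_pi.1 (hPu s)) i
    have h2 : ∀ i : Fin n, HasDerivAt (fun s => u s i) ((A *ᵥ u s) i) s :=
      fun i => (hasDerivAt_pi.1 (hus s)) i
    have h3 : HasDerivAt (fun s => ∑ i, (P *ᵥ u s) i * u s i)
        (∑ i, ((P *ᵥ (A *ᵥ u s)) i * u s i + (P *ᵥ u s) i * (A *ᵥ u s) i)) s :=
      HasDerivAt.fun_sum fun i _ => (h1 i).mul (h2 i)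
    simpa [dotProduct, Finset.sum_add_distrib] using h3
  have key : ∀ s, (P *ᵥ (A *ᵥ u s)) ⬝ᵥ u s + (P *ᵥ u s) ⬝ᵥ (A *ᵥ u s)
      = ((Aᵀ * P + P * A) *ᵥ u s) ⬝ᵥ u s := by
    intro s
    have e1 : (P *ᵥ (A *ᵥ u s)) ⬝ᵥ u s = ((P * A) *ᵥ u s) ⬝ᵥ u s := by
      rw [Matrix.mulVec_mulVec]
    have e2 : (P *ᵥ u s) ⬝ᵥ (A *ᵥ u s) = ((Aᵀ * P) *ᵥ u s) ⬝ᵥ u s := by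
      rw [Matrix.dotProduct_mulVec, ← Matrix.mulVec_transpose, Matrix.mulVec_mulVec]
    rw [e1, e2, Matrix.add_mulVec, add_dotProduct]
    ring
  rw [← key s]
  exact hcomp s

private lemma lyap_antitone (A P : Matrix (Fin n) (Fin n) ℝ)
    (h : ∀ v, 0 ≤ (-(Aᵀ * P + P * A)) *ᵥ v ⬝ᵥ v) (y : Fin n → ℝ) :
    Antitone fun s : ℝ => (P *ᵥ (NormedSpace.exp (s • A) *ᵥ y)) ⬝ᵥ (NormedSpace.exp (s • A) *ᵥ y) := by
  apply antitone_of_deriv_nonpos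
  · exact fun s => (lyap_hasDerivAt A P y s).differentiableAt
  · intro s
    rw [(lyap_hasDerivAt A P y s).deriv]
    have := h (NormedSpace.exp (s • A) *ᵥ y)
    rw [Matrix.neg_mulVec, neg_dotProduct] at this
    linarith

end deriv

section bounds

variable {n : ℕ}

private lemma posdef_lower (hn : 1 ≤ n) {P : Matrix (Fin n) (Fin n) ℝ} (hP : P.PosDef) :
    ∃ c : ℝ, 0 < c ∧ ∀ v, c * (v ⬝ᵥ v) ≤ P *ᵥ v ⬝ᵥ v := by
  obtain ⟨v₀, hv₀, h⟩ := ratio_lemma hn (fun v => v ⬝ᵥ v) (fun v => P *ᵥ v ⬝ᵥ v)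
    e_continuous (quad_continuous P) e_homog (quad_homog P) (fun v hv => posdef_quad_pos hP hv)
  have he0 : 0 < v₀ ⬝ᵥ v₀ :=
    lt_of_le_of_ne (e_nonneg v₀) (fun hne => hv₀ (dotProduct_self_eq_zero.1 hne.symm))
  have hq0 : 0 < P *ᵥ v₀ ⬝ᵥ v₀ := posdef_quad_pos hP hv₀
  set ρ := (v₀ ⬝ᵥ v₀) / (P *ᵥ v₀ ⬝ᵥ v₀) with hρ
  have hρpos : 0 < ρ := div_pos he0 hq0
  refine ⟨ρ⁻¹, inv_pos.2 hρpos, fun v => ?_⟩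
  rw [inv_mul_le_iff₀ hρpos]
  exact h v

private lemma posdef_upper (hn : 1 ≤ n) {P : Matrix (Fin n) (Fin n) ℝ} (hP : P.PosDef) :
    ∃ C : ℝ, 0 < C ∧ ∀ v, P *ᵥ v ⬝ᵥ v ≤ C * (v ⬝ᵥ v) := by
  obtain ⟨v₀, hv₀, h⟩ := ratio_lemma hn (fun v => P *ᵥ v ⬝ᵥ v) (fun v => v ⬝ᵥ v)
    (quad_continuous P) e_continuous (quad_homog P) e_homog
    (fun v hv => lt_of_le_of_ne (e_nonneg v) (fun hne => hv (dotProduct_self_eq_zero.1 hne.symm)))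
  have he0 : 0 < v₀ ⬝ᵥ v₀ :=
    lt_of_le_of_ne (e_nonneg v₀) (fun hne => hv₀ (dotProduct_self_eq_zero.1 hne.symm))
  have hq0 : 0 < P *ᵥ v₀ ⬝ᵥ v₀ := posdef_quad_pos hP hv₀
  exact ⟨_, div_pos hq0 he0, h⟩

private lemma shrink_lemma (hn : 1 ≤ n) {M Q : Matrix (Fin n) (Fin n) ℝ}
    (hM : ∀ v, 0 ≤ M *ᵥ v ⬝ᵥ v) (hQ : Q.PosDef) (hlt : (-(M - Q)).PosDef) :
    ∃ ρ, 0 ≤ ρ ∧ ρ < 1 ∧ ∀ v, M *ᵥ v ⬝ᵥ v ≤ ρ * (Q *ᵥ v ⬝ᵥ v) := by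
  obtain ⟨v₀, hv₀, h⟩ := ratio_lemma hn (fun v => M *ᵥ v ⬝ᵥ v) (fun v => Q *ᵥ v ⬝ᵥ v)
    (quad_continuous M) (quad_continuous Q) (quad_homog M) (quad_homog Q)
    (fun v hv => posdef_quad_pos hQ hv)
  have hq0 : 0 < Q *ᵥ v₀ ⬝ᵥ v₀ := posdef_quad_pos hQ hv₀
  have hflt : M *ᵥ v₀ ⬝ᵥ v₀ < Q *ᵥ v₀ ⬝ᵥ v₀ := by
    have := posdef_quad_pos hlt hv₀
    rw [Matrix.neg_mulVec, neg_dotProduct, Matrix.sub_mulVec, sub_dotProduct] at this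
    linarith
  exact ⟨_, div_nonneg (hM v₀) hq0.le, (div_lt_one hq0).2 hflt, h⟩

end bounds

/-- **Statement 0** (dual discrete-time conditions, cf. (4) in the paper).
If there exist symmetric positive definite matrices `P i` with
`Aᵢᵀ Pᵢ + Pᵢ Aᵢ ≺ 0` and `exp(Aᵢᵀ T̄) Pᵢ exp(Aᵢ T̄) − Pⱼ ≺ 0 (dual condition)` for `i ≠ j`,
then the switched system is globally asymptotically stable over all switching
sequences with minimum dwell-time `T̄`. -/
theorem min_dwell_time_stability_dual
    (n N : ℕ) (hn : 1 ≤ n) (hN : 2 ≤ N)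
    (A : Fin N → Matrix (Fin n) (Fin n) ℝ)
    (T : ℝ) (hT : 0 < T)
    (P : Fin N → Matrix (Fin n) (Fin n) ℝ)
    (hPsymm : ∀ i, (P i).IsSymm)
    (hPpos : ∀ i, (P i).PosDef)
    (hcont : ∀ i, (-((A i)ᵀ * P i + P i * A i)).PosDef)
    (hdisc : ∀ i j, i ≠ j →
      (-(NormedSpace.exp (T • (A i)ᵀ) * P i * NormedSpace.exp (T • A i) - P j)).PosDef)
    -- a switching sequence with minimum dwell-time `T`
    (t : ℕ → ℝ) (ht0 : t 0 = 0) (htmono : StrictMono t)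
    (htop : Tendsto t atTop atTop)
    (ι : ℕ → Fin N) (hι : ∀ k, ι (k + 1) ≠ ι k)
    (hdwell : ∀ k, T ≤ t (k + 1) - t k)
    -- the corresponding trajectory from `x0`
    (x0 : Fin n → ℝ) (x : ℝ → Fin n → ℝ)
    (hx0 : x (t 0) = x0)
    (hx : ∀ k, ∀ s ∈ Set.Icc (t k) (t (k + 1)),
      x s = NormedSpace.exp ((s - t k) • A (ι k)) *ᵥ x (t k)) :
    Tendsto x atTop (𝓝 0) := by
  haveI : Nonempty (Fin N) := ⟨⟨0, by omega⟩⟩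
  -- spectral-type bounds for the P i
  choose c hcpos hc using fun i => posdef_lower hn (hPpos i)
  choose C hCpos hC using fun i => posdef_upper hn (hPpos i)
  set lam : ℝ := Finset.univ.inf' Finset.univ_nonempty c with hlamdef
  set Lam : ℝ := Finset.univ.sup' Finset.univ_nonempty C with hLamdef
  have hlam : 0 < lam := by
    rw [hlamdef, Finset.lt_inf'_iff]
    exact fun i _ => hcpos i
  have hLam : 0 < Lam :=
    lt_of_lt_of_le (hCpos ⟨0, by omega⟩) (Finset.le_sup' C (Finset.mem_univ _))
  have hlam_le : ∀ i v, lam * (v ⬝ᵥ v) ≤ P i *ᵥ v ⬝ᵥ v := fun i v =>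
    le_trans (mul_le_mul_of_nonneg_right (Finset.inf'_le c (Finset.mem_univ i)) (e_nonneg v))
      (hc i v)
  have hLam_le : ∀ i v, P i *ᵥ v ⬝ᵥ v ≤ Lam * (v ⬝ᵥ v) := fun i v =>
    le_trans (hC i v)
      (mul_le_mul_of_nonneg_right (Finset.le_sup' C (Finset.mem_univ i)) (e_nonneg v))
  -- transpose of the exponential
  have hBt : ∀ i, NormedSpace.exp (T • (A i)ᵀ) = (NormedSpace.exp (T • A i))ᵀ := by
    intro i
    rw [← Matrix.transpose_smul, Matrix.exp_transpose]
  -- contraction factors for each pair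
  have hpair : ∀ p : Fin N × Fin N, ∃ ρp : ℝ, 0 ≤ ρp ∧ ρp < 1 ∧ (p.1 ≠ p.2 → ∀ v : Fin n → ℝ,
      (P p.1 *ᵥ (NormedSpace.exp (T • A p.1) *ᵥ v)) ⬝ᵥ (NormedSpace.exp (T • A p.1) *ᵥ v)
        ≤ ρp * (P p.2 *ᵥ v ⬝ᵥ v)) := by
    rintro ⟨i, j⟩
    by_cases hij : i = j
    · exact ⟨0, le_refl 0, zero_lt_one, fun h => absurd hij h⟩
    · have hM : ∀ v, 0 ≤ ((NormedSpace.exp (T • A i))ᵀ * P i * NormedSpace.exp (T • A i))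
          *ᵥ v ⬝ᵥ v := fun v => by
        rw [quad_conj]
        exact possemidef_quad_nonneg (hPpos i).posSemidef _
      have hlt : (-(((NormedSpace.exp (T • A i))ᵀ * P i * NormedSpace.exp (T • A i))
          - P j)).PosDef := by
        have := hdisc i j hij
        rwa [hBt i] at this
      obtain ⟨ρp, h0, h1, h2⟩ := shrink_lemma hn hM (hPpos j) hlt
      refine ⟨ρp, h0, h1, fun _ v => ?_⟩
      have := h2 v
      rwa [quad_conj] at this
  choose ρf hρf0 hρf1 hρf using hpair
  set ρ : ℝ := Finset.univ.sup' Finset.univ_nonempty ρf with hρdef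
  have hρ0 : 0 ≤ ρ :=
    le_trans (hρf0 (⟨0, by omega⟩, ⟨0, by omega⟩)) (Finset.le_sup' ρf (Finset.mem_univ _))
  have hρ1 : ρ < 1 := by
    rw [hρdef, Finset.sup'_lt_iff]
    exact fun p _ => hρf1 p
  have hρle : ∀ i j, i ≠ j → ∀ v : Fin n → ℝ,
      (P i *ᵥ (NormedSpace.exp (T • A i) *ᵥ v)) ⬝ᵥ (NormedSpace.exp (T • A i) *ᵥ v)
        ≤ ρ * (P j *ᵥ v ⬝ᵥ v) := fun i j hij v =>
    le_trans (hρf (i, j) hij v)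
      (mul_le_mul_of_nonneg_right (Finset.le_sup' ρf (Finset.mem_univ (i, j)))
        (possemidef_quad_nonneg (hPpos j).posSemidef v))
  -- monotone decrease of each Lyapunov function along its own flow
  have hanti : ∀ i (z : Fin n → ℝ), Antitone fun s : ℝ =>
      (P i *ᵥ (NormedSpace.exp (s • A i) *ᵥ z)) ⬝ᵥ (NormedSpace.exp (s • A i) *ᵥ z) :=
    fun i z => lyap_antitone (A i) (P i)
      (fun v => possemidef_quad_nonneg (hcont i).posSemidef v) z
  have hexp0 : ∀ i (z : Fin n → ℝ), NormedSpace.exp ((0 : ℝ) • A i) *ᵥ z = z := by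
    intro i z
    rw [zero_smul, NormedSpace.exp_zero, Matrix.one_mulVec]
  -- recursion for the trajectory at switching times
  have hy : ∀ k, x (t (k + 1)) = NormedSpace.exp ((t (k + 1) - t k) • A (ι k)) *ᵥ x (t k) :=
    fun k => hx k (t (k + 1)) ⟨(htmono (Nat.lt_succ_self k)).le, le_refl _⟩
  -- the discrete Lyapunov sequence
  set w : ℕ → ℝ := fun k =>
    (P (ι k) *ᵥ (NormedSpace.exp (T • A (ι k)) *ᵥ x (t k)))
      ⬝ᵥ (NormedSpace.exp (T • A (ι k)) *ᵥ x (t k)) with hwdef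
  have ha : ∀ k, (P (ι k) *ᵥ x (t (k + 1))) ⬝ᵥ x (t (k + 1)) ≤ w k := by
    intro k
    rw [hy k]
    exact hanti (ι k) (x (t k)) (hdwell k)
  have hstep : ∀ k, w (k + 1) ≤ ρ * w k := by
    intro k
    calc w (k + 1) ≤ ρ * ((P (ι k) *ᵥ x (t (k + 1))) ⬝ᵥ x (t (k + 1))) :=
          hρle (ι (k + 1)) (ι k) (hι k) (x (t (k + 1)))
      _ ≤ ρ * w k := mul_le_mul_of_nonneg_left (ha k) hρ0
  have hgeo : ∀ k, w k ≤ ρ ^ k * w 0 := by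
    intro k
    induction k with
    | zero => simp
    | succ m ih =>
      calc w (m + 1) ≤ ρ * w m := hstep m
        _ ≤ ρ * (ρ ^ m * w 0) := mul_le_mul_of_nonneg_left ih hρ0
        _ = ρ ^ (m + 1) * w 0 := by ring
  -- squared-norm bound on each interval [t (k+1), t (k+2)]
  have hbound : ∀ k, ∀ r ∈ Set.Icc (t (k + 1)) (t (k + 2)),
      ‖x r‖ ^ 2 ≤ Lam * (ρ ^ k * w 0) / (lam * lam) := by
    intro k r hr
    have hA1 : ‖x r‖ ^ 2 ≤ x r ⬝ᵥ x r := norm_sq_le_dot (x r)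
    have hA2 : lam * (x r ⬝ᵥ x r) ≤ (P (ι (k + 1)) *ᵥ x r) ⬝ᵥ x r := hlam_le _ _
    have hA3 : (P (ι (k + 1)) *ᵥ x r) ⬝ᵥ x r
        ≤ (P (ι (k + 1)) *ᵥ x (t (k + 1))) ⬝ᵥ x (t (k + 1)) := by
      rw [hx (k + 1) r hr]
      have := hanti (ι (k + 1)) (x (t (k + 1)))
        (show (0 : ℝ) ≤ r - t (k + 1) from sub_nonneg.2 hr.1)
      simpa only [hexp0] using this
    have hA4 : (P (ι (k + 1)) *ᵥ x (t (k + 1))) ⬝ᵥ x (t (k + 1))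
        ≤ Lam * (x (t (k + 1)) ⬝ᵥ x (t (k + 1))) := hLam_le _ _
    have hA5 : lam * (x (t (k + 1)) ⬝ᵥ x (t (k + 1)))
        ≤ (P (ι k) *ᵥ x (t (k + 1))) ⬝ᵥ x (t (k + 1)) := hlam_le _ _
    have hB1 : lam * (x (t (k + 1)) ⬝ᵥ x (t (k + 1))) ≤ ρ ^ k * w 0 :=
      le_trans hA5 (le_trans (ha k) (hgeo k))
    have hB2 : x (t (k + 1)) ⬝ᵥ x (t (k + 1)) ≤ (ρ ^ k * w 0) / lam := by
      rw [le_div_iff₀ hlam]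
      linarith
    have hB3 : lam * (x r ⬝ᵥ x r) ≤ Lam * ((ρ ^ k * w 0) / lam) :=
      le_trans (le_trans hA2 (le_trans hA3 hA4)) (mul_le_mul_of_nonneg_left hB2 hLam.le)
    have hB4 : x r ⬝ᵥ x r ≤ Lam * ((ρ ^ k * w 0) / lam) / lam := by
      rw [le_div_iff₀ hlam]
      linarith
    have heq : Lam * ((ρ ^ k * w 0) / lam) / lam = Lam * (ρ ^ k * w 0) / (lam * lam) := by
      field_simp
    linarith [hA1, hB4, heq ▸ hB4]
  -- conclusion
  rw [NormedAddCommGroup.tendsto_nhds_zero]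
  intro ε hε
  have hεsq : (0 : ℝ) < ε ^ 2 := by positivity
  have hlim : Tendsto (fun k : ℕ => Lam * (ρ ^ k * w 0) / (lam * lam)) atTop (𝓝 0) := by
    have h1 : Tendsto (fun k : ℕ => ρ ^ k) atTop (𝓝 0) :=
      tendsto_pow_atTop_nhds_zero_of_lt_one hρ0 hρ1
    have h2 := ((h1.mul_const (w 0)).const_mul Lam).div_const (lam * lam)
    simpa using h2
  obtain ⟨K, hK⟩ := Filter.eventually_atTop.1 (hlim.eventually_lt_const hεsq)
  filter_upwards [eventually_ge_atTop (t (K + 1))] with r hr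
  have hex : ∃ m, r < t m := (htop.eventually (eventually_gt_atTop r)).exists
  have hm : r < t (Nat.find hex) := Nat.find_spec hex
  have hmK : K + 2 ≤ Nat.find hex := by
    by_contra h
    push_neg at h
    have h2 : t (Nat.find hex) ≤ t (K + 1) := htmono.monotone (by omega)
    linarith
  have hk1 : t (Nat.find hex - 1) ≤ r := by
    have h3 := Nat.find_min hex (show Nat.find hex - 1 < Nat.find hex by omega)
    push_neg at h3
    exact h3
  set k := Nat.find hex - 2 with hkdef
  have hmem : r ∈ Set.Icc (t (k + 1)) (t (k + 2)) := by
    constructor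
    · have hh : k + 1 = Nat.find hex - 1 := by omega
      rw [hh]; exact hk1
    · have hh : k + 2 = Nat.find hex := by omega
      rw [hh]; exact hm.le
  have h1 := hbound k r hmem
  have h2 : Lam * (ρ ^ k * w 0) / (lam * lam) < ε ^ 2 := hK k (by omega)
  have h3 : ‖x r‖ ^ 2 < ε ^ 2 := lt_of_le_of_lt h1 h2
  exact lt_of_pow_lt_pow_left₀ 2 hε.le h3
end

section
/- Let T̄ > 0. Suppose there exist a scalar ε > 0, symmetric positive definite n×n matrices P_1, …, P_N, and, for each pair i ≠ j in {1,…,N}, a continuously differentiable symmetric 3n×3n matrix function Z_{ij} : [0, T̄] → S^{3n} satisfying the looping (boundary) condition Y_2^T Z_{ij}(T̄) Y_2 − Y_1^T Z_{ij}(0) Y_1 = 0 and such that, for all τ ∈ [0, T̄] and all i ≠ j, Ψ_{ij}(T̄) + He(Z_{ij}(τ) D_n(A_i)) + Z_{ij}'(τ) ⪯ 0. Then the switched system ẋ = A_{σ(t)} x is globally asymptotically stable over the class of switching sequences with constant switching period, i.e. with t_{k+1} − t_k = T̄ for all k. -/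
open Matrix Filter Topology

/-- `Y₁ = [Iₙ 0; Iₙ 0; 0 Iₙ]`. -/
def Y1 (n : ℕ) : Matrix (Fin n ⊕ (Fin n ⊕ Fin n)) (Fin n ⊕ Fin n) ℝ :=
  Matrix.fromBlocks 1 0 (Matrix.fromRows 1 0) (Matrix.fromRows 0 1)

/-- `Y₂ = [0 Iₙ; Iₙ 0; 0 Iₙ]`. -/
def Y2 (n : ℕ) : Matrix (Fin n ⊕ (Fin n ⊕ Fin n)) (Fin n ⊕ Fin n) ℝ :=
  Matrix.fromBlocks 0 1 (Matrix.fromRows 1 0) (Matrix.fromRows 0 1)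

/-- `Dₙ(M) = diag(M, 0ₙ, 0ₙ)`. -/
def Dn {n : ℕ} (M : Matrix (Fin n) (Fin n) ℝ) :
    Matrix (Fin n ⊕ (Fin n ⊕ Fin n)) (Fin n ⊕ (Fin n ⊕ Fin n)) ℝ :=
  Matrix.fromBlocks M 0 0 0

/-- `He(M) = M + Mᵀ`. -/
def He {m : Type*} (M : Matrix m m ℝ) : Matrix m m ℝ := M + Mᵀ

/-- `Ψᵢⱼ(T) = diag(T(Aᵢᵀ Pᵢ + Pᵢ Aᵢ), Pᵢ − Pⱼ + ε Iₙ, 0ₙ)`. -/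
def Psi {n : ℕ} (T ε : ℝ) (Ai Pi Pj : Matrix (Fin n) (Fin n) ℝ) :
    Matrix (Fin n ⊕ (Fin n ⊕ Fin n)) (Fin n ⊕ (Fin n ⊕ Fin n)) ℝ :=
  Matrix.fromBlocks (T • (Aiᵀ * Pi + Pi * Ai)) 0 0
    (Matrix.fromBlocks (Pi - Pj + ε • (1 : Matrix (Fin n) (Fin n) ℝ)) 0 0 0)

lemma hasDerivAt_dotProduct {ι : Type*} [Fintype ι] {f g : ℝ → ι → ℝ} {f' g' : ι → ℝ} {τ : ℝ}
    (hf : ∀ a, HasDerivAt (fun s => f s a) (f' a) τ)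
    (hg : ∀ a, HasDerivAt (fun s => g s a) (g' a) τ) :
    HasDerivAt (fun s => f s ⬝ᵥ g s) (f' ⬝ᵥ g τ + f τ ⬝ᵥ g') τ := by
  have h := HasDerivAt.fun_sum (u := Finset.univ)
    (fun (a : ι) _ => (hf a).mul (hg a))
  simp only [dotProduct]
  refine h.congr_deriv (Eq.symm ?_)
  simp [Finset.sum_add_distrib]

lemma hasDerivAt_mulVec {ι κ : Type*} [Fintype ι] [Fintype κ]
    {M : ℝ → Matrix κ ι ℝ} {M' : Matrix κ ι ℝ} {g : ℝ → ι → ℝ} {g' : ι → ℝ} {τ : ℝ}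
    (hM : ∀ a b, HasDerivAt (fun s => M s a b) (M' a b) τ)
    (hg : ∀ b, HasDerivAt (fun s => g s b) (g' b) τ) (a : κ) :
    HasDerivAt (fun s => (M s *ᵥ g s) a) ((M' *ᵥ g τ + M τ *ᵥ g') a) τ := by
  have := hasDerivAt_dotProduct (f := fun s => M s a) (g := g)
    (f' := M' a) (g' := g') (hM a) hg
  simpa [mulVec] using this

section ExpDeriv

attribute [local instance] Matrix.linftyOpNormedAddCommGroup Matrix.linftyOpNormedRing
  Matrix.linftyOpNormedAlgebra

lemma matrix_exp_entry_hasDerivAt {n : ℕ} (A : Matrix (Fin n) (Fin n) ℝ) (τ : ℝ) (a b : Fin n) :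
    HasDerivAt (fun s : ℝ => NormedSpace.exp (s • A) a b)
      ((A * NormedSpace.exp (τ • A)) a b) τ := by
  have h : HasDerivAt (fun s : ℝ => NormedSpace.exp (s • A))
      (A * NormedSpace.exp (τ • A)) τ := hasDerivAt_exp_smul_const' A τ
  have hb : ∀ M : Matrix (Fin n) (Fin n) ℝ, ‖M a b‖ ≤ 1 * ‖M‖ := by
    intro M
    rw [one_mul, ← coe_nnnorm, ← coe_nnnorm, NNReal.coe_le_coe, Matrix.linfty_opNNNorm_def]
    calc ‖M a b‖₊ ≤ ∑ j, ‖M a j‖₊ :=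
          Finset.single_le_sum (f := fun j => ‖M a j‖₊) (fun _ _ => zero_le)
            (Finset.mem_univ b)
      _ ≤ _ := Finset.le_sup (f := fun i => ∑ j, ‖M i j‖₊) (Finset.mem_univ a)
  let L : Matrix (Fin n) (Fin n) ℝ →L[ℝ] ℝ :=
    LinearMap.mkContinuous
      { toFun := fun M => M a b
        map_add' := fun _ _ => rfl
        map_smul' := fun _ _ => rfl } 1 hb
  exact (L.hasFDerivAt.comp_hasDerivAt τ h)

end ExpDeriv

lemma matrix_exp_entry_continuous {n : ℕ} (A : Matrix (Fin n) (Fin n) ℝ) (a b : Fin n) :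
    Continuous (fun s : ℝ => NormedSpace.exp (s • A) a b) :=
  continuous_iff_continuousAt.2 fun τ => (matrix_exp_entry_hasDerivAt A τ a b).continuousAt

/-- The key per-interval inequality from the looped-functional conditions. -/
lemma key_step {n : ℕ} {T ε : ℝ} (hT : 0 < T)
    (Ai Pi Pj : Matrix (Fin n) (Fin n) ℝ)
    (Zf Z'f : ℝ → Matrix (Fin n ⊕ (Fin n ⊕ Fin n)) (Fin n ⊕ (Fin n ⊕ Fin n)) ℝ)
    (hZs : ∀ τ ∈ Set.Icc (0:ℝ) T, (Zf τ).IsSymm)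
    (hZd : ∀ τ ∈ Set.Icc (0:ℝ) T, ∀ a b, HasDerivAt (fun s => Zf s a b) (Z'f τ a b) τ)
    (hloop : (Y2 n)ᵀ * Zf T * Y2 n - (Y1 n)ᵀ * Zf 0 * Y1 n = 0)
    (hlmi : ∀ τ ∈ Set.Icc (0:ℝ) T,
      (-(Psi T ε Ai Pi Pj + He (Zf τ * Dn Ai) + Z'f τ)).PosSemidef)
    (v : Fin n → ℝ) :
    (NormedSpace.exp (T • Ai) *ᵥ v) ⬝ᵥ (Pi *ᵥ (NormedSpace.exp (T • Ai) *ᵥ v))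
      ≤ v ⬝ᵥ (Pj *ᵥ v) - ε * (v ⬝ᵥ v) := by
  classical
  let y : ℝ → Fin n → ℝ := fun τ => NormedSpace.exp (τ • Ai) *ᵥ v
  have hyd : ∀ (τ : ℝ) (m : Fin n), HasDerivAt (fun s => y s m) ((Ai *ᵥ y τ) m) τ := by
    intro τ m
    have h : HasDerivAt (fun s => ∑ q, NormedSpace.exp (s • Ai) m q * v q)
        (∑ q, (Ai * NormedSpace.exp (τ • Ai)) m q * v q) τ :=
      HasDerivAt.fun_sum fun q _ => (matrix_exp_entry_hasDerivAt Ai τ m q).mul_const _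
    have e1 : (fun s => y s m) = fun s => ∑ q, NormedSpace.exp (s • Ai) m q * v q := by
      funext s; simp [y, mulVec, dotProduct]
    have e2 : (Ai *ᵥ y τ) m = ∑ q, (Ai * NormedSpace.exp (τ • Ai)) m q * v q := by
      show (Ai *ᵥ (NormedSpace.exp (τ • Ai) *ᵥ v)) m = _
      rw [Matrix.mulVec_mulVec]
      simp [mulVec, dotProduct]
    rw [e1, e2]; exact h
  have hy0 : y 0 = v := by
    show NormedSpace.exp ((0:ℝ) • Ai) *ᵥ v = v
    rw [zero_smul, NormedSpace.exp_zero, Matrix.one_mulVec]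
  let w : Fin n → ℝ := y T
  let ζ : ℝ → (Fin n ⊕ (Fin n ⊕ Fin n)) → ℝ :=
    fun τ => Sum.elim (y τ) (Sum.elim v w)
  have hζd : ∀ (τ : ℝ) (p), HasDerivAt (fun s => ζ s p) (Sum.elim (Ai *ᵥ y τ) 0 p) τ := by
    intro τ p
    cases p with
    | inl m => simpa [ζ] using hyd τ m
    | inr q => simpa [ζ] using hasDerivAt_const τ (Sum.elim v w q)
  let c : ℝ := v ⬝ᵥ ((Pi - Pj + ε • (1 : Matrix (Fin n) (Fin n) ℝ)) *ᵥ v)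
  let G : ℝ → ℝ := fun τ => ζ τ ⬝ᵥ (Zf τ *ᵥ ζ τ) + T * (y τ ⬝ᵥ (Pi *ᵥ y τ)) + τ * c
  have hGd : ∀ τ ∈ Set.Icc (0:ℝ) T, HasDerivAt G
      (ζ τ ⬝ᵥ ((Psi T ε Ai Pi Pj + He (Zf τ * Dn Ai) + Z'f τ) *ᵥ ζ τ)) τ := by
    intro τ hτ
    have hζ' := hζd τ
    have d1 : HasDerivAt (fun s => ζ s ⬝ᵥ (Zf s *ᵥ ζ s))
        (Sum.elim (Ai *ᵥ y τ) 0 ⬝ᵥ (Zf τ *ᵥ ζ τ)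
          + ζ τ ⬝ᵥ (Z'f τ *ᵥ ζ τ + Zf τ *ᵥ Sum.elim (Ai *ᵥ y τ) 0)) τ :=
      hasDerivAt_dotProduct hζ' (hasDerivAt_mulVec (hZd τ hτ) hζ')
    have d2 : HasDerivAt (fun s => T * (y s ⬝ᵥ (Pi *ᵥ y s)))
        (T * ((Ai *ᵥ y τ) ⬝ᵥ (Pi *ᵥ y τ) + y τ ⬝ᵥ ((0:Matrix (Fin n) (Fin n) ℝ) *ᵥ y τ + Pi *ᵥ (Ai *ᵥ y τ)))) τ := by
      exact (hasDerivAt_dotProduct (hyd τ)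
        (hasDerivAt_mulVec (M := fun _ => Pi) (M' := 0)
          (fun a b => hasDerivAt_const τ (Pi a b)) (hyd τ))).const_mul T
    have d3 : HasDerivAt (fun s : ℝ => s * c) c τ := by
      simpa using (hasDerivAt_id τ).mul_const c
    have dG := (d1.add d2).add d3
    have hDz : Dn Ai *ᵥ ζ τ = Sum.elim (Ai *ᵥ y τ) 0 := by
      show Dn Ai *ᵥ Sum.elim (y τ) (Sum.elim v w) = _
      simp [Dn, Matrix.fromBlocks_mulVec, Matrix.zero_mulVec]
    have p1 : ζ τ ⬝ᵥ (Psi T ε Ai Pi Pj *ᵥ ζ τ)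
        = y τ ⬝ᵥ ((T • (Aiᵀ * Pi + Pi * Ai)) *ᵥ y τ) + c := by
      show Sum.elim (y τ) (Sum.elim v w) ⬝ᵥ (Psi T ε Ai Pi Pj *ᵥ Sum.elim (y τ) (Sum.elim v w)) = _
      simp [Psi, Matrix.fromBlocks_mulVec, sumElim_dotProduct_sumElim,
        Matrix.zero_mulVec, c]
    have p1' : y τ ⬝ᵥ ((T • (Aiᵀ * Pi + Pi * Ai)) *ᵥ y τ)
        = T * ((Ai *ᵥ y τ) ⬝ᵥ (Pi *ᵥ y τ) + y τ ⬝ᵥ (Pi *ᵥ (Ai *ᵥ y τ))) := by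
      rw [Matrix.smul_mulVec, dotProduct_smul, smul_eq_mul, Matrix.add_mulVec,
        dotProduct_add]
      congr 2
      · rw [← Matrix.mulVec_mulVec, Matrix.dotProduct_mulVec, Matrix.vecMul_transpose]
      · rw [← Matrix.mulVec_mulVec]
    have p2 : ζ τ ⬝ᵥ (He (Zf τ * Dn Ai) *ᵥ ζ τ)
        = Sum.elim (Ai *ᵥ y τ) 0 ⬝ᵥ (Zf τ *ᵥ ζ τ) + ζ τ ⬝ᵥ (Zf τ *ᵥ Sum.elim (Ai *ᵥ y τ) 0) := by
      have hsymm : (Zf τ)ᵀ = Zf τ := hZs τ hτ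
      rw [He, Matrix.add_mulVec, dotProduct_add]
      have t1 : ζ τ ⬝ᵥ ((Zf τ * Dn Ai) *ᵥ ζ τ) = ζ τ ⬝ᵥ (Zf τ *ᵥ Sum.elim (Ai *ᵥ y τ) 0) := by
        rw [← Matrix.mulVec_mulVec, hDz]
      have t2 : ζ τ ⬝ᵥ ((Zf τ * Dn Ai)ᵀ *ᵥ ζ τ) = Sum.elim (Ai *ᵥ y τ) 0 ⬝ᵥ (Zf τ *ᵥ ζ τ) := by
        rw [Matrix.dotProduct_mulVec, Matrix.vecMul_transpose, ← Matrix.mulVec_mulVec, hDz]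
        rw [Matrix.dotProduct_mulVec, ← Matrix.transpose_transpose (Zf τ), Matrix.vecMul_transpose]
        rw [Matrix.transpose_transpose, hsymm]
      rw [t1, t2]
      ring
    refine dG.congr_deriv (Eq.symm ?_)
    rw [Matrix.add_mulVec, Matrix.add_mulVec, dotProduct_add, dotProduct_add, p1, p1', p2,
      dotProduct_add]
    simp [Matrix.zero_mulVec]
    ring
  have hGle : ∀ τ ∈ Set.Icc (0:ℝ) T,
      ζ τ ⬝ᵥ ((Psi T ε Ai Pi Pj + He (Zf τ * Dn Ai) + Z'f τ) *ᵥ ζ τ) ≤ 0 := by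
    intro τ hτ
    have h := (hlmi τ hτ).dotProduct_mulVec_nonneg (ζ τ)
    rw [star_trivial, Matrix.neg_mulVec, dotProduct_neg] at h
    linarith
  have hanti : AntitoneOn G (Set.Icc 0 T) := by
    apply antitoneOn_of_deriv_nonpos (convex_Icc 0 T)
    · intro τ hτ; exact (hGd τ hτ).continuousAt.continuousWithinAt
    · intro τ hτ
      rw [interior_Icc] at hτ
      exact ((hGd τ ⟨hτ.1.le, hτ.2.le⟩).differentiableAt).differentiableWithinAt
    · intro τ hτ
      rw [interior_Icc] at hτ
      have hτ' : τ ∈ Set.Icc (0:ℝ) T := ⟨hτ.1.le, hτ.2.le⟩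
      rw [(hGd τ hτ').deriv]
      exact hGle τ hτ'
  have hGT : G T ≤ G 0 :=
    hanti (Set.left_mem_Icc.2 hT.le) (Set.right_mem_Icc.2 hT.le) hT.le
  -- the looping condition
  let η : (Fin n ⊕ Fin n) → ℝ := Sum.elim v w
  have hζ0 : ζ 0 = Y1 n *ᵥ η := by
    show Sum.elim (y 0) (Sum.elim v w) = Y1 n *ᵥ Sum.elim v w
    rw [hy0]
    funext p
    rcases p with a | (a | a) <;>
      simp [Y1, Matrix.fromBlocks_mulVec, Matrix.fromRows_mulVec, Matrix.one_mulVec,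
        Matrix.zero_mulVec]
  have hζT : ζ T = Y2 n *ᵥ η := by
    show Sum.elim (y T) (Sum.elim v w) = Y2 n *ᵥ Sum.elim v w
    funext p
    rcases p with a | (a | a) <;>
      simp [Y2, w, Matrix.fromBlocks_mulVec, Matrix.fromRows_mulVec, Matrix.one_mulVec,
        Matrix.zero_mulVec]
  have hquad : ∀ (Yv : Matrix (Fin n ⊕ (Fin n ⊕ Fin n)) (Fin n ⊕ Fin n) ℝ)
      (Zm : Matrix (Fin n ⊕ (Fin n ⊕ Fin n)) (Fin n ⊕ (Fin n ⊕ Fin n)) ℝ),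
      (Yv *ᵥ η) ⬝ᵥ (Zm *ᵥ (Yv *ᵥ η)) = η ⬝ᵥ ((Yvᵀ * Zm * Yv) *ᵥ η) := by
    intro Yv Zm
    have e : η ⬝ᵥ (Yvᵀ *ᵥ (Zm *ᵥ (Yv *ᵥ η))) = (Yv *ᵥ η) ⬝ᵥ (Zm *ᵥ (Yv *ᵥ η)) := by
      rw [Matrix.dotProduct_mulVec, Matrix.vecMul_transpose]
    rw [← e, Matrix.mulVec_mulVec, Matrix.mulVec_mulVec]
  have hWT : ζ T ⬝ᵥ (Zf T *ᵥ ζ T) = ζ 0 ⬝ᵥ (Zf 0 *ᵥ ζ 0) := by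
    rw [hζ0, hζT, hquad, hquad, sub_eq_zero.mp hloop]
  -- conclude
  have hG0 : G 0 = ζ 0 ⬝ᵥ (Zf 0 *ᵥ ζ 0) + T * (v ⬝ᵥ (Pi *ᵥ v)) := by
    show ζ 0 ⬝ᵥ (Zf 0 *ᵥ ζ 0) + T * (y 0 ⬝ᵥ (Pi *ᵥ y 0)) + 0 * c = _
    rw [hy0]; ring
  have hGTval : G T = ζ T ⬝ᵥ (Zf T *ᵥ ζ T) + T * (w ⬝ᵥ (Pi *ᵥ w)) + T * c := rfl
  have h1 : w ⬝ᵥ (Pi *ᵥ w) + c ≤ v ⬝ᵥ (Pi *ᵥ v) := by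
    have h2 : T * (w ⬝ᵥ (Pi *ᵥ w) + c) ≤ T * (v ⬝ᵥ (Pi *ᵥ v)) := by
      rw [hGTval, hG0, hWT] at hGT
      linarith
    exact le_of_mul_le_mul_left h2 hT
  have hcval : c = v ⬝ᵥ (Pi *ᵥ v) - v ⬝ᵥ (Pj *ᵥ v) + ε * (v ⬝ᵥ v) := by
    show v ⬝ᵥ ((Pi - Pj + ε • (1 : Matrix (Fin n) (Fin n) ℝ)) *ᵥ v) = _
    rw [Matrix.add_mulVec, Matrix.sub_mulVec, Matrix.smul_mulVec, Matrix.one_mulVec,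
      dotProduct_add, dotProduct_sub, dotProduct_smul, smul_eq_mul]
  show w ⬝ᵥ (Pi *ᵥ w) ≤ v ⬝ᵥ (Pj *ᵥ v) - ε * (v ⬝ᵥ v)
  linarith [h1, hcval.le, hcval.ge]

/-- Corollary 1: constant switching period `T̄`. -/
theorem looped_functional_constant_period_stability
    (n N : ℕ) (hn : 1 ≤ n) (hN : 2 ≤ N)
    (A : Fin N → Matrix (Fin n) (Fin n) ℝ)
    (T ε : ℝ) (hT : 0 < T) (hε : 0 < ε)
    (P : Fin N → Matrix (Fin n) (Fin n) ℝ)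
    (hPsymm : ∀ i, (P i).IsSymm)
    (hPpos : ∀ i, (P i).PosDef)
    (Z Z' : Fin N → Fin N → ℝ →
      Matrix (Fin n ⊕ (Fin n ⊕ Fin n)) (Fin n ⊕ (Fin n ⊕ Fin n)) ℝ)
    (hZsymm : ∀ i j, i ≠ j → ∀ τ ∈ Set.Icc (0 : ℝ) T, (Z i j τ).IsSymm)
    (hZderiv : ∀ i j, i ≠ j → ∀ τ ∈ Set.Icc (0 : ℝ) T, ∀ a b,
      HasDerivAt (fun s => Z i j s a b) (Z' i j τ a b) τ)
    (hZ'cont : ∀ i j, i ≠ j → ContinuousOn (Z' i j) (Set.Icc (0 : ℝ) T))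
    -- looping (boundary) condition
    (hloop : ∀ i j, i ≠ j →
      (Y2 n)ᵀ * Z i j T * Y2 n - (Y1 n)ᵀ * Z i j 0 * Y1 n = 0)
    -- infinite-dimensional LMI conditions
    (hLMI : ∀ i j, i ≠ j → ∀ τ ∈ Set.Icc (0 : ℝ) T,
      (-(Psi T ε (A i) (P i) (P j) + He (Z i j τ * Dn (A i)) + Z' i j τ)).PosSemidef)
    -- a switching sequence with constant switching period `T`
    (t : ℕ → ℝ) (ht0 : t 0 = 0) (htmono : StrictMono t)
    (htop : Tendsto t atTop atTop)
    (ι : ℕ → Fin N) (hι : ∀ k, ι (k + 1) ≠ ι k)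
    (hdwell : ∀ k, t (k + 1) - t k = T)
    -- the corresponding trajectory from `x0`
    (x0 : Fin n → ℝ) (x : ℝ → Fin n → ℝ)
    (hx0 : x (t 0) = x0)
    (hx : ∀ k, ∀ s ∈ Set.Icc (t k) (t (k + 1)),
      x s = NormedSpace.exp ((s - t k) • A (ι k)) *ᵥ x (t k)) :
    Tendsto x atTop (𝓝 0) := by
  classical
  have htT : ∀ k, t (k + 1) = t k + T := fun k => by linarith [hdwell k]
  have htk : ∀ k : ℕ, t k = k * T := by
    intro k
    induction k with
    | zero => simpa using ht0
    | succ k ih =>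
      rw [htT k, ih]
      push_cast
      ring
  have hxk : ∀ k, x (t (k + 1)) = NormedSpace.exp (T • A (ι k)) *ᵥ x (t k) := by
    intro k
    rw [htT k]
    have hmem : t k + T ∈ Set.Icc (t k) (t (k + 1)) :=
      ⟨by linarith, le_of_eq (htT k).symm⟩
    have h := hx k (t k + T) hmem
    rwa [add_sub_cancel_left] at h
  set d : ℕ → ℝ := fun k => x (t k) ⬝ᵥ x (t k) with hd
  set S : ℕ → ℝ := fun k => x (t (k + 1)) ⬝ᵥ (P (ι k) *ᵥ x (t (k + 1))) with hS
  have hstep : ∀ k (j : Fin N), ι k ≠ j →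
      S k ≤ x (t k) ⬝ᵥ (P j *ᵥ x (t k)) - ε * d k := by
    intro k j hj
    have h := key_step hT (A (ι k)) (P (ι k)) (P j) (Z (ι k) j) (Z' (ι k) j)
      (hZsymm _ _ hj) (hZderiv _ _ hj) (hloop _ _ hj) (hLMI _ _ hj) (x (t k))
    show x (t (k + 1)) ⬝ᵥ (P (ι k) *ᵥ x (t (k + 1)))
      ≤ x (t k) ⬝ᵥ (P j *ᵥ x (t k)) - ε * (x (t k) ⬝ᵥ x (t k))
    rw [hxk k]
    exact h
  have hd0 : ∀ k, 0 ≤ d k := by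
    intro k
    show (0:ℝ) ≤ x (t k) ⬝ᵥ x (t k)
    exact Finset.sum_nonneg fun q _ => mul_self_nonneg _
  have hS0 : ∀ k, 0 ≤ S k := by
    intro k
    have h := ((hPpos (ι k)).posSemidef).dotProduct_mulVec_nonneg (x (t (k + 1)))
    rwa [star_trivial] at h
  have hSmono : ∀ k, S (k + 1) ≤ S k - ε * d (k + 1) := by
    intro k
    exact hstep (k + 1) (ι k) (hι k)
  have hanti : Antitone S := antitone_nat_of_succ_le fun k => by
    nlinarith [hSmono k, hd0 (k + 1), hε.le]
  have hbdd : BddBelow (Set.range S) := ⟨0, fun y ⟨k, hk⟩ => hk ▸ hS0 k⟩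
  have hconv : Tendsto S atTop (𝓝 (⨅ k, S k)) := tendsto_atTop_ciInf hanti hbdd
  have hconv' : Tendsto (fun k => S (k + 1)) atTop (𝓝 (⨅ k, S k)) :=
    hconv.comp (tendsto_add_atTop_nat 1)
  have hdiff : Tendsto (fun k => S k - S (k + 1)) atTop (𝓝 0) := by
    simpa using hconv.sub hconv'
  have hεd : Tendsto (fun k => ε * d (k + 1)) atTop (𝓝 0) :=
    squeeze_zero (fun k => mul_nonneg hε.le (hd0 _))
      (fun k => by linarith [hSmono k]) hdiff
  have hdtend' : Tendsto (fun k => d (k + 1)) atTop (𝓝 0) := by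
    have h := hεd.const_mul ε⁻¹
    simp only [mul_zero] at h
    have he : ∀ k, ε⁻¹ * (ε * d (k + 1)) = d (k + 1) := fun k => by
      field_simp
    simpa [he] using h
  have hdtend : Tendsto d atTop (𝓝 0) := by
    rw [← Filter.tendsto_add_atTop_iff_nat 1]
    exact hdtend'
  have hcoord : ∀ m : Fin n, Tendsto (fun k => |x (t k) m|) atTop (𝓝 0) := by
    intro m
    have hsq : Tendsto (fun k => x (t k) m * x (t k) m) atTop (𝓝 0) := by
      refine squeeze_zero (fun k => mul_self_nonneg _) (fun k => ?_) hdtend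
      exact Finset.single_le_sum (f := fun q => x (t k) q * x (t k) q)
        (fun q _ => mul_self_nonneg _) (Finset.mem_univ m)
    have h := (Real.continuous_sqrt.tendsto 0).comp hsq
    simpa [Function.comp_def, Real.sqrt_mul_self_eq_abs] using h
  have habs : Tendsto (fun k => ∑ q, |x (t k) q|) atTop (𝓝 0) := by
    have h := tendsto_finset_sum (Finset.univ : Finset (Fin n))
      (fun q _ => hcoord q)
    simpa using h
  have hCex : ∃ C : ℝ, 0 ≤ C ∧ ∀ (i : Fin N), ∀ τ ∈ Set.Icc (0:ℝ) T, ∀ m q : Fin n,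
      |NormedSpace.exp (τ • A i) m q| ≤ C := by
    have h1 : ∀ p : Fin N × Fin n × Fin n, ∃ C, ∀ τ ∈ Set.Icc (0:ℝ) T,
        |NormedSpace.exp (τ • A p.1) p.2.1 p.2.2| ≤ C := by
      intro p
      obtain ⟨C, hC⟩ := (isCompact_Icc (a := (0:ℝ)) (b := T)).exists_bound_of_continuousOn
        ((matrix_exp_entry_continuous (A p.1) p.2.1 p.2.2).continuousOn)
      exact ⟨C, fun τ hτ => by simpa using hC τ hτ⟩
    choose cfun hcfun using h1
    have hne : (Finset.univ : Finset (Fin N × Fin n × Fin n)).Nonempty := by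
      refine ⟨(⟨0, by omega⟩, ⟨0, by omega⟩, ⟨0, by omega⟩), Finset.mem_univ _⟩
    refine ⟨max 0 (Finset.univ.sup' hne cfun), le_max_left _ _, ?_⟩
    intro i τ hτ m q
    calc |NormedSpace.exp (τ • A i) m q| ≤ cfun (i, m, q) := hcfun (i, m, q) τ hτ
      _ ≤ Finset.univ.sup' hne cfun := Finset.le_sup' cfun (Finset.mem_univ _)
      _ ≤ _ := le_max_right _ _
  obtain ⟨C, hC0, hC⟩ := hCex
  set K : ℝ → ℕ := fun s => ⌊s / T⌋₊ with hK
  have hKmem : ∀ s : ℝ, 0 ≤ s → s ∈ Set.Icc (t (K s)) (t (K s + 1)) := by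
    intro s hs
    have h1 : (K s : ℝ) ≤ s / T := Nat.floor_le (div_nonneg hs hT.le)
    have h2 : s / T < (K s : ℝ) + 1 := Nat.lt_floor_add_one _
    have hsT : s / T * T = s := by field_simp
    constructor
    · rw [htk]
      calc (K s : ℝ) * T ≤ s / T * T := by nlinarith
        _ = s := hsT
    · rw [htk]
      push_cast
      nlinarith
  have hKtop : Tendsto K atTop atTop :=
    tendsto_nat_floor_atTop.comp (tendsto_id.atTop_div_const hT)
  rw [tendsto_pi_nhds]
  intro m
  have hbound : ∀ s : ℝ, 0 ≤ s → |x s m| ≤ C * ∑ q, |x (t (K s)) q| := by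
    intro s hs
    have hmem := hKmem s hs
    rw [hx (K s) s hmem]
    have hτ : s - t (K s) ∈ Set.Icc (0:ℝ) T := by
      refine ⟨by linarith [hmem.1], ?_⟩
      have h2 := hmem.2
      rw [htT (K s)] at h2
      linarith
    calc |(NormedSpace.exp ((s - t (K s)) • A (ι (K s))) *ᵥ x (t (K s))) m|
        = |∑ q, NormedSpace.exp ((s - t (K s)) • A (ι (K s))) m q * x (t (K s)) q| := by
          simp [mulVec, dotProduct]
      _ ≤ ∑ q, |NormedSpace.exp ((s - t (K s)) • A (ι (K s))) m q * x (t (K s)) q| :=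
          Finset.abs_sum_le_sum_abs _ _
      _ ≤ ∑ q, C * |x (t (K s)) q| := by
          refine Finset.sum_le_sum fun q _ => ?_
          rw [abs_mul]
          exact mul_le_mul_of_nonneg_right (hC _ _ hτ _ _) (abs_nonneg _)
      _ = C * ∑ q, |x (t (K s)) q| := by rw [Finset.mul_sum]
  have hg : Tendsto (fun s => C * ∑ q, |x (t (K s)) q|) atTop (𝓝 0) := by
    have h := (habs.comp hKtop).const_mul C
    simpa [Function.comp_def] using h
  have hup : ∀ᶠ s in atTop, x s m ≤ C * ∑ q, |x (t (K s)) q| := by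
    filter_upwards [eventually_ge_atTop (0:ℝ)] with s hs
    exact le_trans (le_abs_self _) (hbound s hs)
  have hlo : ∀ᶠ s in atTop, -(C * ∑ q, |x (t (K s)) q|) ≤ x s m := by
    filter_upwards [eventually_ge_atTop (0:ℝ)] with s hs
    have h := abs_le.mp (hbound s hs)
    linarith [h.1]
  have hfin : Tendsto (fun s => x s m) atTop (𝓝 0) :=
    tendsto_of_tendsto_of_tendsto_of_le_of_le' (by simpa using hg.neg) hg hlo hup
  simpa using hfin
end

section
/- Let 0 < T_i^min < T_i^max < ∞ for each i ∈ {1,…,N}. Suppose there exist a scalar ε > 0, symmetric positive definite n×n matrices P_1, …, P_N, and, for each pair i ≠ j, a symmetric 3n×3n matrix function Z_{ij} : [0, T_i^max] × [T_i^min, T_i^max] → S^{3n}, continuously differentiable in its first argument, such that for every T ∈ [T_i^min, T_i^max]: Y_2^T Z_{ij}(T, T) Y_2 − Y_1^T Z_{ij}(0, T) Y_1 = 0 and, for all τ ∈ [0, T], Ψ_{ij}(T) + He(Z_{ij}(τ, T) D_n(A_i)) + ∂Z_{ij}/∂τ(τ, T) ⪯ 0. Then, with the same matrices P_i, the conditions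 exp(A_i^T T) P_i exp(A_i T) − P_j ≺ 0 hold for all i ≠ j and all T ∈ [T_i^min, T_i^max]. -/
open Matrix Filter Topology

lemma hasDerivAt_exp_entry {m : ℕ} (A : Matrix (Fin m) (Fin m) ℝ) (τ : ℝ) (a b : Fin m) :
    HasDerivAt (fun t : ℝ => NormedSpace.exp (t • A) a b)
      ((A * NormedSpace.exp (τ • A)) a b) τ := by
  letI : NormedRing (Matrix (Fin m) (Fin m) ℝ) := Matrix.linftyOpNormedRing
  letI : NormedAlgebra ℝ (Matrix (Fin m) (Fin m) ℝ) := Matrix.linftyOpNormedAlgebra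
  have h := hasDerivAt_exp_smul_const' (𝕂 := ℝ) A τ
  let L0 : Matrix (Fin m) (Fin m) ℝ →ₗ[ℝ] ℝ :=
    { toFun := fun M => M a b, map_add' := fun _ _ => rfl, map_smul' := fun _ _ => rfl }
  let L := LinearMap.toContinuousLinearMap L0
  exact L.hasFDerivAt.comp_hasDerivAt τ h

lemma hasDerivAt_quadForm {m : Type*} [Fintype m]
    (u v : ℝ → m → ℝ) (u' v' : m → ℝ) (M : ℝ → Matrix m m ℝ) (M' : Matrix m m ℝ) (τ : ℝ)
    (hu : ∀ a, HasDerivAt (fun t => u t a) (u' a) τ)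
    (hM : ∀ a b, HasDerivAt (fun t => M t a b) (M' a b) τ)
    (hv : ∀ b, HasDerivAt (fun t => v t b) (v' b) τ) :
    HasDerivAt (fun t => u t ⬝ᵥ (M t *ᵥ v t))
      (u' ⬝ᵥ (M τ *ᵥ v τ) + u τ ⬝ᵥ (M' *ᵥ v τ) + u τ ⬝ᵥ (M τ *ᵥ v')) τ := by
  have h : HasDerivAt (fun t => ∑ a, ∑ b, u t a * (M t a b * v t b))
      (∑ a, ∑ b, (u' a * (M τ a b * v τ b) +
        u τ a * (M' a b * v τ b + M τ a b * v' b))) τ :=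
    HasDerivAt.fun_sum fun a _ => HasDerivAt.fun_sum fun b _ => (hu a).mul ((hM a b).mul (hv b))
  convert h using 1
  · ext t; simp [dotProduct, mulVec, Finset.mul_sum]
  · simp only [dotProduct, mulVec, Finset.mul_sum, ← Finset.sum_add_distrib]
    exact Finset.sum_congr rfl fun a _ => Finset.sum_congr rfl fun b _ => by ring

lemma dot_transpose {m k : Type*} [Fintype m] [Fintype k]
    (M : Matrix m k ℝ) (x : k → ℝ) (y : m → ℝ) :
    x ⬝ᵥ (Mᵀ *ᵥ y) = (M *ᵥ x) ⬝ᵥ y := by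
  rw [Matrix.dotProduct_mulVec, Matrix.vecMul_transpose]

/-- Theorem 4: affine conditions imply the mode-dependent
dwell-time discrete conditions of Theorem 2, with the same `Pᵢ`. Here
`Z i j τ T` is the matrix function `Z_{ij}(τ, T)` and `Z' i j τ T` is its
partial derivative `∂Z_{ij}/∂τ (τ, T)`. -/
theorem looped_functional_implies_mode_dependent_condition
    (n N : ℕ) (hn : 1 ≤ n) (hN : 2 ≤ N)
    (A : Fin N → Matrix (Fin n) (Fin n) ℝ)
    (Tmin Tmax : Fin N → ℝ)
    (hTmin : ∀ i, 0 < Tmin i) (hTord : ∀ i, Tmin i < Tmax i)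
    (ε : ℝ) (hε : 0 < ε)
    (P : Fin N → Matrix (Fin n) (Fin n) ℝ)
    (hPsymm : ∀ i, (P i).IsSymm)
    (hPpos : ∀ i, (P i).PosDef)
    (Z Z' : Fin N → Fin N → ℝ → ℝ →
      Matrix (Fin n ⊕ (Fin n ⊕ Fin n)) (Fin n ⊕ (Fin n ⊕ Fin n)) ℝ)
    (hZsymm : ∀ i j, i ≠ j → ∀ T ∈ Set.Icc (Tmin i) (Tmax i),
      ∀ τ ∈ Set.Icc (0 : ℝ) (Tmax i), (Z i j τ T).IsSymm)
    (hZderiv : ∀ i j, i ≠ j → ∀ T ∈ Set.Icc (Tmin i) (Tmax i),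
      ∀ τ ∈ Set.Icc (0 : ℝ) (Tmax i), ∀ a b,
        HasDerivAt (fun s => Z i j s T a b) (Z' i j τ T a b) τ)
    (hZ'cont : ∀ i j, i ≠ j → ∀ T ∈ Set.Icc (Tmin i) (Tmax i),
      ContinuousOn (fun τ => Z' i j τ T) (Set.Icc (0 : ℝ) (Tmax i)))
    -- looping (boundary) condition, for every admissible dwell-time `T`
    (hloop : ∀ i j, i ≠ j → ∀ T ∈ Set.Icc (Tmin i) (Tmax i),
      (Y2 n)ᵀ * Z i j T T * Y2 n - (Y1 n)ᵀ * Z i j 0 T * Y1 n = 0)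
    -- infinite-dimensional LMI conditions
    (hLMI : ∀ i j, i ≠ j → ∀ T ∈ Set.Icc (Tmin i) (Tmax i), ∀ τ ∈ Set.Icc (0 : ℝ) T,
      (-(Psi T ε (A i) (P i) (P j) + He (Z i j τ T * Dn (A i)) + Z' i j τ T)).PosSemidef) :
    ∀ i j, i ≠ j → ∀ T ∈ Set.Icc (Tmin i) (Tmax i),
      (-(NormedSpace.exp (T • (A i)ᵀ) * P i * NormedSpace.exp (T • A i) - P j)).PosDef := by
  
  intro i j hij T hT
  have hT0 : 0 < T := lt_of_lt_of_le (hTmin i) hT.1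
  have hsub : Set.Icc (0:ℝ) T ⊆ Set.Icc 0 (Tmax i) := Set.Icc_subset_Icc le_rfl hT.2
  have hexpT : NormedSpace.exp (T • (A i)ᵀ) = (NormedSpace.exp (T • A i))ᵀ := by
    rw [← Matrix.transpose_smul, Matrix.exp_transpose]
  have hPit : (P i)ᵀ = P i := hPsymm i
  have hPjt : (P j)ᵀ = P j := hPsymm j
  rw [Matrix.posDef_iff_dotProduct_mulVec]
  constructor
  · -- Hermitian
    show _ᴴ = _
    rw [Matrix.conjTranspose_eq_transpose_of_trivial, hexpT]
    simp [Matrix.transpose_sub, Matrix.transpose_mul, Matrix.transpose_transpose,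
      hPit, hPjt, Matrix.mul_assoc]
  · intro x hx
    classical
    set χ : ℝ → Fin n → ℝ := fun t => NormedSpace.exp (t • A i) *ᵥ x with hχ
    set w : (Fin n ⊕ Fin n) → ℝ := Sum.elim x (χ T) with hw
    set ξ : ℝ → (Fin n ⊕ (Fin n ⊕ Fin n)) → ℝ := fun t => Sum.elim (χ t) w with hξ
    set ξd : ℝ → (Fin n ⊕ (Fin n ⊕ Fin n)) → ℝ := fun t => Sum.elim (A i *ᵥ χ t) 0 with hξd
    set Q : Matrix (Fin n) (Fin n) ℝ := P i - P j + ε • (1 : Matrix (Fin n) (Fin n) ℝ) with hQ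
    -- derivative of the flow, entrywise
    have hχd : ∀ (t : ℝ) (a : Fin n), HasDerivAt (fun s => χ s a) ((A i *ᵥ χ t) a) t := by
      intro t a
      have h : HasDerivAt (fun s : ℝ => ∑ b, NormedSpace.exp (s • A i) a b * x b)
          (∑ b, (A i * NormedSpace.exp (t • A i)) a b * x b) t :=
        HasDerivAt.fun_sum fun b _ => (hasDerivAt_exp_entry (A i) t a b).mul_const (x b)
      have e1 : (fun s : ℝ => ∑ b, NormedSpace.exp (s • A i) a b * x b)
          = fun s => χ s a := by
        funext s; rw [hχ]; simp [Matrix.mulVec, dotProduct]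
      have e2 : (∑ b, (A i * NormedSpace.exp (t • A i)) a b * x b) = (A i *ᵥ χ t) a := by
        rw [hχ]
        show _ = (A i *ᵥ (NormedSpace.exp (t • A i) *ᵥ x)) a
        rw [Matrix.mulVec_mulVec]
        simp [Matrix.mulVec, dotProduct]
      rw [e1, e2] at h; exact h
    have hξdd : ∀ (t : ℝ) (a : Fin n ⊕ (Fin n ⊕ Fin n)),
        HasDerivAt (fun s => ξ s a) (ξd t a) t := by
      intro t a
      cases a with
      | inl a => exact hχd t a
      | inr a => exact hasDerivAt_const t (w a)
    set g : ℝ → ℝ := fun t => T * (χ t ⬝ᵥ (P i *ᵥ χ t)) + t * (x ⬝ᵥ (Q *ᵥ x))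
      + ξ t ⬝ᵥ (Z i j t T *ᵥ ξ t) with hg
    have hDnξ : ∀ t : ℝ, Dn (A i) *ᵥ ξ t = ξd t := by
      intro t
      show Matrix.fromBlocks (A i) 0 0 0 *ᵥ Sum.elim (χ t) w = Sum.elim (A i *ᵥ χ t) 0
      rw [Matrix.fromBlocks_mulVec]
      simp
    have hgderiv : ∀ τ ∈ Set.Icc (0:ℝ) T, HasDerivAt g
        (ξ τ ⬝ᵥ ((Psi T ε (A i) (P i) (P j) + He (Z i j τ T * Dn (A i)) + Z' i j τ T)
          *ᵥ ξ τ)) τ := by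
      intro τ hτ
      have h1 : HasDerivAt (fun t => χ t ⬝ᵥ (P i *ᵥ χ t))
          ((A i *ᵥ χ τ) ⬝ᵥ (P i *ᵥ χ τ) + χ τ ⬝ᵥ ((0 : Matrix (Fin n) (Fin n) ℝ) *ᵥ χ τ)
            + χ τ ⬝ᵥ (P i *ᵥ (A i *ᵥ χ τ))) τ :=
        hasDerivAt_quadForm χ χ (A i *ᵥ χ τ) (A i *ᵥ χ τ) (fun _ => P i) 0 τ
          (hχd τ) (fun a b => hasDerivAt_const τ (P i a b)) (hχd τ)
      have h2 : HasDerivAt (fun t : ℝ => t * (x ⬝ᵥ (Q *ᵥ x))) (x ⬝ᵥ (Q *ᵥ x)) τ :=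
        hasDerivAt_mul_const _
      have h3 : HasDerivAt (fun t => ξ t ⬝ᵥ (Z i j t T *ᵥ ξ t))
          (ξd τ ⬝ᵥ (Z i j τ T *ᵥ ξ τ) + ξ τ ⬝ᵥ (Z' i j τ T *ᵥ ξ τ)
            + ξ τ ⬝ᵥ (Z i j τ T *ᵥ ξd τ)) τ :=
        hasDerivAt_quadForm ξ ξ (ξd τ) (ξd τ) (fun t => Z i j t T) (Z' i j τ T) τ
          (hξdd τ) (fun a b => hZderiv i j hij T hT τ (hsub hτ) a b) (hξdd τ)
      have htot := ((h1.const_mul T).add h2).add h3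
      rw [hg]
      convert htot using 1
      case e'_4 => rfl
      case e'_5 => rfl
      case e'_8 => rfl
      have hsymmZ : (Z i j τ T)ᵀ = Z i j τ T := hZsymm i j hij T hT τ (hsub hτ)
      have t1 : (Z i j τ T * Dn (A i)) *ᵥ ξ τ = Z i j τ T *ᵥ ξd τ := by
        rw [← Matrix.mulVec_mulVec, hDnξ]
      have t2 : ξ τ ⬝ᵥ ((Z i j τ T * Dn (A i))ᵀ *ᵥ ξ τ) = ξd τ ⬝ᵥ (Z i j τ T *ᵥ ξ τ) := by
        rw [Matrix.transpose_mul, ← Matrix.mulVec_mulVec, dot_transpose, hDnξ, hsymmZ]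
      have hHe : ξ τ ⬝ᵥ (He (Z i j τ T * Dn (A i)) *ᵥ ξ τ)
          = ξd τ ⬝ᵥ (Z i j τ T *ᵥ ξ τ) + ξ τ ⬝ᵥ (Z i j τ T *ᵥ ξd τ) := by
        simp only [He]
        rw [Matrix.add_mulVec, dotProduct_add, t1, t2]; ring
      have hPsiq : ξ τ ⬝ᵥ (Psi T ε (A i) (P i) (P j) *ᵥ ξ τ)
          = T * ((A i *ᵥ χ τ) ⬝ᵥ (P i *ᵥ χ τ) + χ τ ⬝ᵥ (P i *ᵥ (A i *ᵥ χ τ)))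
            + x ⬝ᵥ (Q *ᵥ x) := by
        show Sum.elim (χ τ) (Sum.elim x (χ T)) ⬝ᵥ
          (Matrix.fromBlocks (T • ((A i)ᵀ * P i + P i * A i)) 0 0
            (Matrix.fromBlocks (P i - P j + ε • (1 : Matrix (Fin n) (Fin n) ℝ)) 0 0 0)
            *ᵥ Sum.elim (χ τ) (Sum.elim x (χ T))) = _
        rw [Matrix.fromBlocks_mulVec, Matrix.fromBlocks_mulVec, ← hQ]
        simp only [Matrix.zero_mulVec, add_zero, zero_add, Sum.elim_comp_inl,
          Sum.elim_comp_inr, sumElim_dotProduct_sumElim, dotProduct_zero,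
          Matrix.smul_mulVec, dotProduct_smul, smul_eq_mul,
          Matrix.add_mulVec, dotProduct_add, ← Matrix.mulVec_mulVec, dot_transpose]
      rw [Matrix.add_mulVec, Matrix.add_mulVec, dotProduct_add, dotProduct_add,
        hPsiq, hHe]
      rw [Matrix.zero_mulVec, dotProduct_zero]
      ring
    -- derivative is nonpositive
    have hgd_nonpos : ∀ τ ∈ Set.Icc (0:ℝ) T,
        ξ τ ⬝ᵥ ((Psi T ε (A i) (P i) (P j) + He (Z i j τ T * Dn (A i)) + Z' i j τ T)
          *ᵥ ξ τ) ≤ 0 := by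
      intro τ hτ
      have h := (Matrix.posSemidef_iff_dotProduct_mulVec.mp (hLMI i j hij T hT τ hτ)).2 (ξ τ)
      rw [Matrix.neg_mulVec, dotProduct_neg] at h
      have hs : star (ξ τ) = ξ τ := star_trivial _
      rw [hs] at h
      linarith
    -- g is antitone on [0, T]
    have hanti : AntitoneOn g (Set.Icc 0 T) := by
      apply antitoneOn_of_deriv_nonpos (convex_Icc 0 T)
      · exact fun τ hτ => (hgderiv τ hτ).continuousAt.continuousWithinAt
      · intro τ hτ
        rw [interior_Icc] at hτ
        exact ((hgderiv τ ⟨hτ.1.le, hτ.2.le⟩).differentiableAt).differentiableWithinAt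
      · intro τ hτ
        rw [interior_Icc] at hτ
        rw [(hgderiv τ ⟨hτ.1.le, hτ.2.le⟩).deriv]
        exact hgd_nonpos τ ⟨hτ.1.le, hτ.2.le⟩
    have hgm : g T ≤ g 0 := hanti ⟨le_rfl, hT0.le⟩ ⟨hT0.le, le_rfl⟩ hT0.le
    -- boundary values
    have hχ0 : χ 0 = x := by
      rw [hχ]
      show NormedSpace.exp ((0:ℝ) • A i) *ᵥ x = x
      rw [zero_smul, NormedSpace.exp_zero, Matrix.one_mulVec]
    have hY1w : Y1 n *ᵥ w = ξ 0 := by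
      show Matrix.fromBlocks 1 0 (Matrix.fromRows 1 0) (Matrix.fromRows 0 1)
        *ᵥ Sum.elim x (χ T) = Sum.elim (χ 0) w
      rw [Matrix.fromBlocks_mulVec]
      simp only [Sum.elim_comp_inl, Sum.elim_comp_inr, Matrix.fromRows_mulVec, hχ0, hw]
      funext a
      rcases a with a | a
      · simp
      · rcases a with a | a <;> simp
    have hY2w : Y2 n *ᵥ w = ξ T := by
      show Matrix.fromBlocks 0 1 (Matrix.fromRows 1 0) (Matrix.fromRows 0 1)
        *ᵥ Sum.elim x (χ T) = Sum.elim (χ T) w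
      rw [Matrix.fromBlocks_mulVec]
      simp only [Sum.elim_comp_inl, Sum.elim_comp_inr, Matrix.fromRows_mulVec, hw]
      funext a
      rcases a with a | a
      · simp
      · rcases a with a | a <;> simp
    have econj : ∀ (Y : Matrix (Fin n ⊕ (Fin n ⊕ Fin n)) (Fin n ⊕ Fin n) ℝ)
        (M : Matrix (Fin n ⊕ (Fin n ⊕ Fin n)) (Fin n ⊕ (Fin n ⊕ Fin n)) ℝ),
        (Y *ᵥ w) ⬝ᵥ (M *ᵥ (Y *ᵥ w)) = w ⬝ᵥ ((Yᵀ * M * Y) *ᵥ w) := by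
      intro Y M
      rw [← Matrix.mulVec_mulVec, ← Matrix.mulVec_mulVec, dot_transpose, Matrix.mulVec_mulVec]
    have hloopq : ξ T ⬝ᵥ (Z i j T T *ᵥ ξ T) = ξ 0 ⬝ᵥ (Z i j 0 T *ᵥ ξ 0) := by
      have h := sub_eq_zero.mp (hloop i j hij T hT)
      calc ξ T ⬝ᵥ (Z i j T T *ᵥ ξ T)
          = (Y2 n *ᵥ w) ⬝ᵥ (Z i j T T *ᵥ (Y2 n *ᵥ w)) := by rw [hY2w]
        _ = w ⬝ᵥ (((Y2 n)ᵀ * Z i j T T * Y2 n) *ᵥ w) := econj _ _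
        _ = w ⬝ᵥ (((Y1 n)ᵀ * Z i j 0 T * Y1 n) *ᵥ w) := by rw [h]
        _ = (Y1 n *ᵥ w) ⬝ᵥ (Z i j 0 T *ᵥ (Y1 n *ᵥ w)) := (econj _ _).symm
        _ = ξ 0 ⬝ᵥ (Z i j 0 T *ᵥ ξ 0) := by rw [hY1w]
    -- extract the key inequality
    have hgT : g T = T * (χ T ⬝ᵥ (P i *ᵥ χ T)) + T * (x ⬝ᵥ (Q *ᵥ x))
        + ξ T ⬝ᵥ (Z i j T T *ᵥ ξ T) := by rw [hg]
    have hg0 : g 0 = T * (x ⬝ᵥ (P i *ᵥ x)) + ξ 0 ⬝ᵥ (Z i j 0 T *ᵥ ξ 0) := by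
      rw [hg]; simp [hχ0]
    have key : χ T ⬝ᵥ (P i *ᵥ χ T) + x ⬝ᵥ (Q *ᵥ x) ≤ x ⬝ᵥ (P i *ᵥ x) := by
      rw [hgT, hg0, hloopq] at hgm
      have h1 : T * (χ T ⬝ᵥ (P i *ᵥ χ T) + x ⬝ᵥ (Q *ᵥ x)) ≤ T * (x ⬝ᵥ (P i *ᵥ x)) := by
        nlinarith [hgm]
      exact le_of_mul_le_mul_left h1 hT0
    have hQx : x ⬝ᵥ (Q *ᵥ x) = x ⬝ᵥ (P i *ᵥ x) - x ⬝ᵥ (P j *ᵥ x) + ε * (x ⬝ᵥ x) := by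
      rw [hQ, Matrix.add_mulVec, Matrix.sub_mulVec, dotProduct_add,
        dotProduct_sub, Matrix.smul_mulVec, Matrix.one_mulVec,
        dotProduct_smul, smul_eq_mul]
    have hxx : 0 < x ⬝ᵥ x := by
      have h0 : 0 ≤ x ⬝ᵥ x := Finset.sum_nonneg fun b _ => mul_self_nonneg (x b)
      exact lt_of_le_of_ne h0 fun h => hx (dotProduct_self_eq_zero.mp h.symm)
    -- conclude
    have hform : x ⬝ᵥ ((NormedSpace.exp (T • (A i)ᵀ) * P i * NormedSpace.exp (T • A i))
        *ᵥ x) = χ T ⬝ᵥ (P i *ᵥ χ T) := by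
      rw [hexpT, ← Matrix.mulVec_mulVec, ← Matrix.mulVec_mulVec, dot_transpose]
    have hs : star x = x := star_trivial _
    rw [hs, Matrix.neg_mulVec, dotProduct_neg, Matrix.sub_mulVec,
      dotProduct_sub, hform]
    nlinarith [key, hQx, hxx, hε]
end
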